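/- Let L̃ : ℝ^p → ℝ be convex and differentiable, λ > 0, and let β̂ be a minimizer of β ↦ L̃(β) + λ‖β‖₁ over ℝ^p. Let β* ∈ ℝ^p have support S = {j : β*_j ≠ 0}, and set g = β̂ − β*. Then 0 ≤ ⟨∇L̃(β̂) − ∇L̃(β*), g⟩ ≤ λ·( ‖g_S‖₁ − ‖g_{S^c}‖₁ ) − ⟨∇L̃(β*), g⟩, where g_S and g_{S^c} denote the restrictions of g to the coordinates in S and in its complement S^c, respectively. -/

import Mathlib

open Finset

noncomputable section

/-!
At the minimizer `β̂` the one-sided derivative of `L̃ + λ‖·‖₁` in the direction `β* − β̂` is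
nonnegative. Bounding the penalty by its chord gives `⟨∇L̃(β̂), g⟩ ≤ λ(‖β*‖₁ − ‖β̂‖₁)`, and
coordinatewise `|β*_j| − |β̂_j|` is at most `|g_j|` on the support `S` of `β*` and equals `−|g_j|`
off it. The lower bound is monotonicity of the gradient of a convex function.
-/

section FirstOrder

open Set AffineMap

variable {E : Type*} [NormedAddCommGroup E] [NormedSpace ℝ E]

theorem ConvexOn.sub_le_fderiv_of_isMinOn_add {L R : E → ℝ} {L' : StrongDual ℝ E} {x : E}
    (hR : ConvexOn ℝ univ R) (hL : HasFDerivAt L L' x) (hmin : IsMinOn (L + R) univ x) (y : E) :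
    R x - R y ≤ L' (y - x) := by
  -- Replacing `R` by its chord on `[x, y]` keeps `x` a minimizer on the segment and makes the
  -- objective differentiable there.
  set φ : ℝ → ℝ := fun t => L (lineMap x y t) + t * (R y - R x)
  have hφ_min : IsMinOn φ (Icc 0 1) 0 := by
    rintro t ⟨ht₀, ht₁⟩
    have hchord : R (lineMap x y t) ≤ (1 - t) * R x + t * R y := by
      rw [lineMap_apply_module]
      exact hR.2 (mem_univ _) (mem_univ _) (by linarith) ht₀ (by ring)
    have := hmin (mem_univ (lineMap x y t))
    simp only [Pi.add_apply, mem_ofPred_eq, φ, lineMap_apply_zero, zero_mul, add_zero] at this ⊢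
    linarith
  have hφ_deriv : HasDerivAt φ (L' (y - x) + (R y - R x)) 0 := by
    have hL₀ : HasFDerivAt L L' (lineMap x y (0 : ℝ)) := by rwa [lineMap_apply_zero]
    exact (hL₀.comp_hasDerivAt 0 hasDerivAt_lineMap).add
      ((hasDerivAt_id 0).mul_const (R y - R x)) |>.congr_deriv (by simp)
  have hone : (1 : ℝ) ∈ posTangentConeAt (Icc 0 1) 0 :=
    mem_posTangentConeAt_of_segment_subset (by simp [segment_eq_Icc])
  have := hφ_min.localize.hasFDerivWithinAt_nonneg hφ_deriv.hasFDerivAt.hasFDerivWithinAt hone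
  simp only [ContinuousLinearMap.toSpanSingleton_apply, one_smul] at this
  linarith

-- Every point minimizes `-f + f`.
theorem ConvexOn.add_fderiv_sub_le {f : E → ℝ} {f' : StrongDual ℝ E} {x : E}
    (hf : ConvexOn ℝ univ f) (hf' : HasFDerivAt f f' x) (y : E) : f x + f' (y - x) ≤ f y := by
  have := hf.sub_le_fderiv_of_isMinOn_add hf'.neg (L := -f) (fun z _ => by simp) y
  rw [neg_apply] at this
  linarith

theorem ConvexOn.hasFDerivAt_sub_apply_sub_nonneg {f : E → ℝ} {f'ₓ f'ᵧ : StrongDual ℝ E}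
    {x y : E} (hf : ConvexOn ℝ univ f) (hx : HasFDerivAt f f'ₓ x) (hy : HasFDerivAt f f'ᵧ y) :
    0 ≤ f'ₓ (x - y) - f'ᵧ (x - y) := by
  have hxy := hf.add_fderiv_sub_le hx y
  have hyx := hf.add_fderiv_sub_le hy x
  rw [← neg_sub, map_neg] at hxy
  linarith

end FirstOrder

section L1

variable {ι : Type*} [Fintype ι]

theorem convexOn_sum_abs : ConvexOn ℝ Set.univ (fun x : ι → ℝ => ∑ i, |x i|) := by
  refine ⟨convex_univ, fun x _ y _ a b ha hb _ => ?_⟩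
  simp only [Pi.add_apply, Pi.smul_apply, smul_eq_mul, mul_sum, ← sum_add_distrib]
  gcongr with i
  calc |a * x i + b * y i| ≤ |a * x i| + |b * y i| := abs_add_le _ _
    _ = a * |x i| + b * |y i| := by rw [abs_mul, abs_mul, abs_of_nonneg ha, abs_of_nonneg hb]

theorem sum_abs_sub_sum_abs_le_sum_support_sub_sum_zeros (a b : ι → ℝ) :
    ∑ j, |b j| - ∑ j, |a j| ≤
      ∑ j ∈ univ.filter (fun j => b j ≠ 0), |a j - b j|
        - ∑ j ∈ univ.filter (fun j => b j = 0), |a j - b j| := by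
  have hterm : ∀ j, |b j| - |a j| ≤ if b j ≠ 0 then |a j - b j| else -|a j - b j| := by
    intro j
    split_ifs with hb
    · simpa [abs_sub_comm] using abs_sub_abs_le_abs_sub (b j) (a j)
    · simp [not_not.mp hb]
  calc ∑ j, |b j| - ∑ j, |a j| = ∑ j, (|b j| - |a j|) := (sum_sub_distrib ..).symm
    _ ≤ ∑ j, if b j ≠ 0 then |a j - b j| else -|a j - b j| := sum_le_sum fun j _ => hterm j
    _ = _ := by simp only [sum_ite, not_not, sum_neg_distrib, sub_eq_add_neg]

end L1

/-- **First-order optimality for ℓ₁-penalized convex minimization** (as used in the proof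
of Theorem 5 of "Distributed Adaptive Huber Regression"): if `β̂` minimizes
`L̃ + λ‖·‖₁` with `L̃` convex and differentiable, then with `g = β̂ − β*` and
`S = supp(β*)`,
`0 ≤ ⟨∇L̃(β̂) − ∇L̃(β*), g⟩ ≤ λ(‖g_S‖₁ − ‖g_{Sᶜ}‖₁) − ⟨∇L̃(β*), g⟩`. -/
theorem l1_penalized_first_order_bound {p : ℕ} (L : (Fin p → ℝ) → ℝ)
    (lam : ℝ) (hlam : 0 < lam)
    (hconv : ConvexOn ℝ Set.univ L) (hdiff : Differentiable ℝ L)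
    (bhat bstar : Fin p → ℝ)
    -- β̂ minimizes β ↦ L̃(β) + λ‖β‖₁ over ℝ^p
    (hmin : ∀ β, L bhat + lam * ∑ j, |bhat j| ≤ L β + lam * ∑ j, |β j|) :
    0 ≤ fderiv ℝ L bhat (bhat - bstar) - fderiv ℝ L bstar (bhat - bstar)
    ∧ fderiv ℝ L bhat (bhat - bstar) - fderiv ℝ L bstar (bhat - bstar)
      ≤ lam * ((∑ j ∈ Finset.univ.filter (fun j => bstar j ≠ 0), |bhat j - bstar j|)
            - ∑ j ∈ Finset.univ.filter (fun j => bstar j = 0), |bhat j - bstar j|)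
        - fderiv ℝ L bstar (bhat - bstar) := by
  have hpenalty : ConvexOn ℝ Set.univ (fun β : Fin p → ℝ => lam * ∑ j, |β j|) :=
    convexOn_sum_abs.smul hlam.le
  have hopt := hpenalty.sub_le_fderiv_of_isMinOn_add (hdiff bhat).hasFDerivAt
    (fun β _ => hmin β) bstar
  rw [← neg_sub bhat bstar, map_neg] at hopt
  have hsplit := mul_le_mul_of_nonneg_left
    (sum_abs_sub_sum_abs_le_sum_support_sub_sum_zeros bhat bstar) hlam.le
  refine ⟨hconv.hasFDerivAt_sub_apply_sub_nonneg (hdiff bhat).hasFDerivAt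
    (hdiff bstar).hasFDerivAt, ?_⟩
  linarith [mul_sub lam (∑ j, |bstar j|) (∑ j, |bhat j|)]
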